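/- arXiv:2303.01790 — 2 statements merged into one kernel-verified Lean document; each statement's English description precedes it below -/
import Mathlib

section
/- Let k ≥ 1, let m_1, …, m_k be positive integers with M = m_1 + ⋯ + m_k, and set n = M − (k−1). Then the number of k-tuples (W_1,…,W_k) of subsets of {1,…,n} with |W_i| = m_i for every i, W_1 ∪ ⋯ ∪ W_k = {1,…,n}, and τ(W_1) ∨ ⋯ ∨ τ(W_k) = 1_n (join in the partition lattice) equals ((M−k)! / ∏_{i=1}^k (m_i−1)!) · (M−(k−1))^{k−1}. -/
open Finset Filter

/-- The partition of `α` whose blocks are `W` together with the singletons outside `W`,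
encoded as a setoid. -/
def tauSetoid {α : Type*} (W : Finset α) : Setoid α where
  r a b := a = b ∨ (a ∈ W ∧ b ∈ W)
  iseqv := by
    constructor
    · exact fun a => Or.inl rfl
    · rintro a b (rfl | ⟨h1, h2⟩)
      · exact Or.inl rfl
      · exact Or.inr ⟨h2, h1⟩
    · rintro a b c (rfl | ⟨h1, h2⟩) h
      · exact h
      · rcases h with rfl | ⟨h3, h4⟩
        · exact Or.inr ⟨h1, h2⟩
        · exact Or.inr ⟨h1, h4⟩

/-!
Fix a root vertex `r`. A tuple `W` whose join is `1_n` and whose sizes satisfy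
`∑ (m i - 1) = n - 1` is a hypertree; orienting it away from `r` writes each `W i` uniquely as
`insert (p i) (C i)`, where the `C i` partition the non-root vertices into blocks of sizes
`m i - 1` and the pointer `p i` (the vertex of `W i` nearest to `r`) makes the relation
"`p i ∈ C j`" acyclic. Conversely every such pair `(C, p)` gives a hypertree. So the count is the
number of ordered partitions, a multinomial coefficient, times the number of acyclic pointer
maps, which is `n ^ (k - 1)` by a Cayley-type forest count: the pointer of block `0` either lands
in block `0` (impossible), or at a root (then the vertices of block `0` become roots), or in
another block (then block `0` merges into it), and induction on the number of blocks finishes.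
-/

open Function

lemma Nat.multinomial_univ_fin_succ {k : ℕ} (s : Fin (k + 1) → ℕ) :
    Nat.multinomial univ s = (∑ i, s i).choose (s 0) * Nat.multinomial univ (Fin.tail s) := by
  conv_lhs => rw [Fin.univ_succ, Nat.multinomial_cons]
  simp [Nat.multinomial, Fin.sum_univ_succ, Finset.sum_map, Finset.prod_map, Fin.tail]

lemma Nat.card_subtype_fin_succ {β : Type*} [Fintype β] {k : ℕ} (P : (Fin (k + 1) → β) → Prop) :
    Nat.card {p // P p} = ∑ v, Nat.card {q : Fin k → β // P (Fin.cons v q)} := by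
  rw [← Nat.card_sigma]
  exact Nat.card_congr (((Fin.consEquiv fun _ => β).subtypeEquiv fun _ => Iff.rfl).symm.trans
    (Equiv.subtypeProdEquivSigmaSubtype fun v q => P (Fin.cons v q)))

lemma Finset.card_sdiff_biUnion_add_sum {α ι : Type*} [Fintype α] [DecidableEq α] [Fintype ι]
    {C : ι → Finset α} (hC : Pairwise (Disjoint on C)) :
    #(univ \ univ.biUnion C) + ∑ i, #(C i) = Fintype.card α := by
  rw [← card_biUnion fun i _ j _ hij => hC hij, card_sdiff_add_card_eq_card (subset_univ _),
    card_univ]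

/-- Block `i` points at the vertex `p i`; the pointers are acyclic when the relation
"`p i` lies in block `j`" admits a strictly decreasing rank. -/
def PointerAcyclic {α ι : Type*} (C : ι → Finset α) (p : ι → α) : Prop :=
  ∃ rank : ι → ℕ, ∀ i j, p i ∈ C j → rank j < rank i

namespace PointerAcyclic

variable {α ι : Type*} {C : ι → Finset α} {p : ι → α}

lemma notMem_self (h : PointerAcyclic C p) (i : ι) : p i ∉ C i := fun hi =>
  let ⟨_, hrank⟩ := h
  lt_irrefl _ (hrank i i hi)

lemma exists_forall_notMem [Finite ι] [Nonempty ι] (h : PointerAcyclic C p) :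
    ∃ i, ∀ j, p i ∉ C j := by
  obtain ⟨rank, hrank⟩ := h
  obtain ⟨i, hi⟩ := Finite.exists_min rank
  exact ⟨i, fun j hj => (hi j).not_gt (hrank i j hj)⟩

end PointerAcyclic

section Cons

variable {α : Type*} {k : ℕ} {C : Fin (k + 1) → Finset α} {v : α} {q : Fin k → α}

lemma pointerAcyclic_cons_iff_tail (hv : ∀ j, v ∉ C j) :
    PointerAcyclic C (Fin.cons v q) ↔ PointerAcyclic (Fin.tail C) q := by
  constructor
  · rintro ⟨rank, hrank⟩
    exact ⟨rank ∘ Fin.succ, fun i j h => hrank i.succ j.succ (by simpa [Fin.tail] using h)⟩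
  · rintro ⟨rank, hrank⟩
    refine ⟨Fin.cons 0 (rank · + 1), fun i j h => ?_⟩
    cases i using Fin.cases with
    | zero => exact absurd h (hv j)
    | succ i =>
      cases j using Fin.cases with
      | zero => simp
      | succ j => simpa using hrank i j (by simpa [Fin.tail] using h)

lemma not_pointerAcyclic_cons_of_mem_zero (hv : v ∈ C 0) :
    ¬ PointerAcyclic C (Fin.cons v q) :=
  fun h => h.notMem_self 0 (by simpa using hv)

/-- The family of `k` blocks obtained by merging block `0` into block `j + 1`. -/
def mergeZeroInto [DecidableEq α] (C : Fin (k + 1) → Finset α) (j : Fin k) : Fin k → Finset α :=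
  update (Fin.tail C) j (C j.succ ∪ C 0)

lemma pointerAcyclic_cons_iff_mergeZeroInto [DecidableEq α] (hC : Pairwise (Disjoint on C))
    {j₀ : Fin k} (hv : v ∈ C j₀.succ) :
    PointerAcyclic C (Fin.cons v q) ↔ PointerAcyclic (mergeZeroInto C j₀) q := by
  unfold mergeZeroInto
  constructor
  · rintro ⟨rank, hrank⟩
    refine ⟨rank ∘ Fin.succ, fun i j h => ?_⟩
    rcases eq_or_ne j j₀ with rfl | hj
    · rcases mem_union.mp (by simpa using h) with h | h
      · exact hrank i.succ j.succ (by simpa [Fin.tail] using h)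
      · exact (hrank 0 j.succ (by simpa using hv)).trans (hrank i.succ 0 (by simpa using h))
    · exact hrank i.succ j.succ (by simpa [hj, Fin.tail] using h)
  · rintro ⟨rank, hrank⟩
    refine ⟨Fin.cons (2 * rank j₀ + 1) (2 * rank ·), fun i j h => ?_⟩
    cases i using Fin.cases with
    | zero =>
      obtain rfl : j = j₀.succ := by
        by_contra hne
        exact disjoint_left.mp (hC hne) (by simpa using h) hv
      simp
    | succ i =>
      cases j using Fin.cases with
      | zero =>
        have := hrank i j₀ (by simp_all)
        simp only [Fin.cons_zero, Fin.cons_succ]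
        omega
      | succ j =>
        have := hrank i j (by rcases eq_or_ne j j₀ with rfl | hj <;> simp_all [Fin.tail])
        simp only [Fin.cons_succ]
        omega

end Cons

section Forest

variable {α : Type*} [DecidableEq α] {k : ℕ} {C : Fin (k + 1) → Finset α}

lemma pairwise_disjoint_mergeZeroInto (hC : Pairwise (Disjoint on C)) (j₀ : Fin k) :
    Pairwise (Disjoint on mergeZeroInto C j₀) := by
  intro a b hab
  have hs {a b : Fin k} (h : a ≠ b) : Disjoint (C a.succ) (C b.succ) := hC (by simpa using h)
  have h0 (a : Fin k) : Disjoint (C a.succ) (C 0) := hC a.succ_ne_zero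
  simp only [onFun, mergeZeroInto, update_apply, Fin.tail]
  split_ifs with ha hb hb
  · exact absurd (ha.trans hb.symm) hab
  · exact disjoint_union_left.mpr ⟨hs fun h => hb h.symm, (h0 b).symm⟩
  · exact disjoint_union_right.mpr ⟨hs ha, h0 a⟩
  · exact hs hab

lemma biUnion_mergeZeroInto [Fintype α] (j₀ : Fin k) :
    univ.biUnion (mergeZeroInto C j₀) = univ.biUnion C := by
  ext x
  simp only [mem_biUnion, mem_univ, true_and, Fin.exists_fin_succ (P := fun j => x ∈ C j),
    mergeZeroInto, update_apply, Fin.tail]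
  constructor
  · rintro ⟨j, hj⟩
    split_ifs at hj with h
    · exact (mem_union.mp hj).elim (fun hj => .inr ⟨j₀, hj⟩) .inl
    · exact .inr ⟨j, hj⟩
  · rintro (hx | ⟨j, hj⟩)
    · exact ⟨j₀, by simp [hx]⟩
    · by_cases h : j = j₀
      · exact ⟨j₀, by simp [← h, hj]⟩
      · exact ⟨j, by simp [h, hj]⟩

variable [Fintype α]

lemma card_pointerAcyclic_succ (hC : Pairwise (Disjoint on C)) :
    Nat.card {p // PointerAcyclic C p} =
      #(univ \ univ.biUnion C) * Nat.card {q // PointerAcyclic (Fin.tail C) q} +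
        ∑ j, #(C j.succ) * Nat.card {q // PointerAcyclic (mergeZeroInto C j) q} := by
  have root : ∀ v ∈ univ \ univ.biUnion C, Nat.card {q // PointerAcyclic C (Fin.cons v q)} =
      Nat.card {q // PointerAcyclic (Fin.tail C) q} := fun v hv =>
    Nat.card_congr <| Equiv.subtypeEquivRight fun _ =>
      pointerAcyclic_cons_iff_tail (by simpa using hv)
  have zero : ∀ v ∈ C 0, Nat.card {q : Fin k → α // PointerAcyclic C (Fin.cons v q)} = 0 :=
    fun v hv => by simp [not_pointerAcyclic_cons_of_mem_zero hv]
  have merge (j : Fin k) : ∀ v ∈ C j.succ, Nat.card {q // PointerAcyclic C (Fin.cons v q)} =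
      Nat.card {q // PointerAcyclic (mergeZeroInto C j) q} := fun v hv =>
    Nat.card_congr <| Equiv.subtypeEquivRight fun _ => pointerAcyclic_cons_iff_mergeZeroInto hC hv
  rw [Nat.card_subtype_fin_succ, ← sum_sdiff (subset_univ (univ.biUnion C)),
    sum_biUnion fun i _ j _ h => hC h, Fin.sum_univ_succ, sum_congr rfl root, sum_congr rfl zero]
  simp [sum_congr rfl (merge _)]

theorem card_pointerAcyclic :
    ∀ {k : ℕ} (C : Fin (k + 1) → Finset α), Pairwise (Disjoint on C) →
      Nat.card {p // PointerAcyclic C p} = #(univ \ univ.biUnion C) * Fintype.card α ^ k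
  | 0, C, hC => by
    have (D : Fin 0 → Finset α) (q : Fin 0 → α) : PointerAcyclic D q := ⟨0, fun i => i.elim0⟩
    simp [card_pointerAcyclic_succ hC, this]
  | k + 1, C, hC => by
    have hCt : Pairwise (Disjoint on Fin.tail C) := hC.comp_of_injective (Fin.succ_injective _)
    have htail : #(univ \ univ.biUnion (Fin.tail C)) + ∑ j : Fin (k + 1), #(C j.succ) =
        Fintype.card α :=
      card_sdiff_biUnion_add_sum hCt
    have hall := card_sdiff_biUnion_add_sum hC
    rw [Fin.sum_univ_succ] at hall
    rw [card_pointerAcyclic_succ hC, card_pointerAcyclic _ hCt,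
      sum_congr rfl fun j _ => by
        rw [card_pointerAcyclic _ (pairwise_disjoint_mergeZeroInto hC j), biUnion_mergeZeroInto],
      ← sum_mul, pow_succ]
    rw [show #(univ \ univ.biUnion (Fin.tail C)) = #(univ \ univ.biUnion C) + #(C 0) by omega,
      ← hall]
    ring

end Forest

section OrderedPartition

variable {α : Type*} [DecidableEq α]

def IsOrderedPartition {ι : Type*} [Fintype ι] (T : Finset α) (s : ι → ℕ) (C : ι → Finset α) :
    Prop :=
  (∀ i, #(C i) = s i) ∧ Pairwise (Disjoint on C) ∧ univ.biUnion C = T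

lemma Fin.univ_biUnion_cons {k : ℕ} (D : Finset α) (C : Fin k → Finset α) :
    univ.biUnion (Fin.cons D C : Fin (k + 1) → Finset α) = D ∪ univ.biUnion C := by
  ext
  simp [Fin.exists_fin_succ]

lemma Finset.disjoint_and_union_eq_iff {D U T : Finset α} :
    Disjoint D U ∧ D ∪ U = T ↔ D ⊆ T ∧ U = T \ D := by
  constructor
  · rintro ⟨hdisj, rfl⟩
    exact ⟨subset_union_left, (union_sdiff_cancel_left hdisj).symm⟩
  · rintro ⟨hD, rfl⟩
    exact ⟨disjoint_sdiff, union_sdiff_of_subset hD⟩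

lemma isOrderedPartition_cons_iff {k : ℕ} {T D : Finset α} {s : Fin (k + 1) → ℕ}
    {C : Fin k → Finset α} :
    IsOrderedPartition T s (Fin.cons D C) ↔
      D ∈ T.powersetCard (s 0) ∧ IsOrderedPartition (T \ D) (Fin.tail s) C := by
  have key := Finset.disjoint_and_union_eq_iff (D := D) (U := univ.biUnion C) (T := T)
  rw [disjoint_biUnion_right] at key
  simp only [IsOrderedPartition, Fin.forall_fin_succ, pairwise_fin_succ_iff_of_isSymm, onFun,
    Fin.cons_zero, Fin.cons_succ, Fin.univ_biUnion_cons, mem_powersetCard, Fin.tail]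
  simp only [mem_univ, forall_const] at key
  tauto

theorem card_isOrderedPartition [Fintype α] :
    ∀ {k : ℕ} (T : Finset α) (s : Fin k → ℕ), ∑ i, s i = #T →
      Nat.card {C // IsOrderedPartition T s C} = Nat.multinomial univ s
  | 0, T, s, hs => by
    have : T = ∅ := by simpa [eq_comm] using hs
    subst this
    simp [IsOrderedPartition]
  | k + 1, T, s, hs => by
    have hfiber (D : Finset α) :
        Nat.card {C // D ∈ T.powersetCard (s 0) ∧ IsOrderedPartition (T \ D) (Fin.tail s) C} =
          if D ∈ T.powersetCard (s 0) then Nat.multinomial univ (Fin.tail s) else 0 := by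
      split_ifs with hD
      · obtain ⟨hDT, hDs⟩ := mem_powersetCard.mp hD
        rw [← card_isOrderedPartition (T \ D) (Fin.tail s) (by
          rw [card_sdiff_of_subset hDT, hDs, ← hs, Fin.sum_univ_succ]
          simp [Fin.tail])]
        simp [hD]
      · simp [hD]
    simp_rw [Nat.card_subtype_fin_succ, isOrderedPartition_cons_iff, hfiber]
    rw [sum_ite_mem, univ_inter, sum_const, card_powersetCard, smul_eq_mul,
      Nat.multinomial_univ_fin_succ, hs]

end OrderedPartition

section Hypertree

variable {α ι : Type*}

lemma iSup_tauSetoid_rel_of_mem {W : ι → Finset α} {i : ι} {x y : α} (hx : x ∈ W i)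
    (hy : y ∈ W i) : (⨆ j, tauSetoid (W j)) x y :=
  Setoid.le_def.mp (le_iSup (fun j => tauSetoid (W j)) i) (Or.inr ⟨hx, hy⟩)

variable [Fintype α] [DecidableEq α] [Fintype ι] {C C' : ι → Finset α} {p p' : ι → α} {r : α}

lemma exists_mem_iff_ne_of_biUnion_eq_erase (hC : univ.biUnion C = univ.erase r) (v : α) :
    (∃ i, v ∈ C i) ↔ v ≠ r := by
  simpa using Finset.ext_iff.mp hC v

lemma PointerAcyclic.exists_eq_root [Nonempty ι] (hC : univ.biUnion C = univ.erase r)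
    (hp : PointerAcyclic C p) : ∃ i, p i = r := by
  obtain ⟨i, hi⟩ := hp.exists_forall_notMem
  exact ⟨i, not_not.mp fun hne =>
    let ⟨j, hj⟩ := (exists_mem_iff_ne_of_biUnion_eq_erase hC _).mpr hne
    hi j hj⟩

lemma biUnion_insert_eq_univ [Nonempty ι] (hC : univ.biUnion C = univ.erase r)
    (hp : PointerAcyclic C p) : univ.biUnion (fun i => insert (p i) (C i)) = univ := by
  refine eq_univ_of_forall fun v => mem_biUnion.mpr ?_
  obtain rfl | hv := eq_or_ne v r
  · obtain ⟨i, hi⟩ := hp.exists_eq_root hC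
    exact ⟨i, mem_univ _, hi ▸ mem_insert_self _ _⟩
  · obtain ⟨i, hi⟩ := (exists_mem_iff_ne_of_biUnion_eq_erase hC v).mpr hv
    exact ⟨i, mem_univ _, mem_insert_of_mem hi⟩

/-- Following the pointers from any vertex, whose ranks decrease, ends at the root. -/
lemma iSup_tauSetoid_insert_eq_top (hC : univ.biUnion C = univ.erase r)
    (hp : PointerAcyclic C p) : ⨆ i, tauSetoid (insert (p i) (C i)) = ⊤ := by
  set S := ⨆ i, tauSetoid (insert (p i) (C i))
  have hblock {v : α} {i : ι} (hv : v ∈ C i) : S v (p i) :=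
    iSup_tauSetoid_rel_of_mem (mem_insert_of_mem hv) (mem_insert_self _ _)
  obtain ⟨rank, hrank⟩ := hp
  have hptr (n : ℕ) : ∀ i, rank i = n → S (p i) r := by
    induction n using Nat.strong_induction_on with
    | _ n ih =>
      rintro i rfl
      obtain hr | hr := eq_or_ne (p i) r
      · exact hr ▸ S.refl' _
      · obtain ⟨j, hj⟩ := (exists_mem_iff_ne_of_biUnion_eq_erase hC _).mpr hr
        exact S.trans' (hblock hj) (ih _ (hrank i j hj) j rfl)
  have hroot (v : α) : S v r := by
    obtain rfl | hv := eq_or_ne v r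
    · exact S.refl' v
    · obtain ⟨i, hi⟩ := (exists_mem_iff_ne_of_biUnion_eq_erase hC v).mpr hv
      exact S.trans' (hblock hi) (hptr _ i rfl)
  exact Setoid.eq_top_iff.mpr fun x y => S.trans' (hroot x) (S.symm' (hroot y))

lemma eq_and_eq_of_insert_eq (hdisj : Pairwise (Disjoint on C))
    (hC : univ.biUnion C = univ.erase r) (hC' : univ.biUnion C' = univ.erase r)
    (hp : PointerAcyclic C p) (hp' : PointerAcyclic C' p')
    (h : ∀ i, insert (p i) (C i) = insert (p' i) (C' i)) : C = C' ∧ p = p' := by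
  obtain ⟨rank, hrank⟩ := id hp'
  -- A disagreement at `i` puts `p' i` in `C i`, and then `p'` leads to a disagreement of
  -- smaller rank.
  have hpp (n : ℕ) : ∀ i, rank i = n → p i = p' i := by
    induction n using Nat.strong_induction_on with
    | _ n ih =>
      rintro i rfl
      by_contra hne
      have hi : p' i ∈ C i :=
        (mem_insert.mp (h i ▸ mem_insert_self (p' i) (C' i))).resolve_left (Ne.symm hne)
      obtain ⟨j, hj⟩ := (exists_mem_iff_ne_of_biUnion_eq_erase hC' _).mpr
        ((exists_mem_iff_ne_of_biUnion_eq_erase hC _).mp ⟨i, hi⟩)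
      have hij : i ≠ j := by
        rintro rfl
        exact hp'.notMem_self i hj
      have hpj : p' i = p j :=
        (mem_insert.mp (h j ▸ mem_insert_of_mem hj)).resolve_right
          (disjoint_left.mp (hdisj hij) hi)
      exact hp'.notMem_self j (ih _ (hrank i j hj) j rfl ▸ hpj ▸ hj)
  have hpp' : p = p' := funext fun i => hpp _ i rfl
  refine ⟨funext fun i => ?_, hpp'⟩
  rw [← erase_insert (hp.notMem_self i), h i, ← hpp', erase_insert (hpp' ▸ hp'.notMem_self i)]

end Hypertree

section Exploration

variable {α ι : Type*} [Fintype α] [DecidableEq α] {W : ι → Finset α}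

lemma eq_univ_of_iSup_tauSetoid_eq_top (hjoin : ⨆ i, tauSetoid (W i) = ⊤) {A : Finset α}
    (hA : A.Nonempty) (hclosed : ∀ i, ¬Disjoint (W i) A → W i ⊆ A) : A = univ := by
  have hle : (⊤ : Setoid α) ≤ Setoid.ker (· ∈ A) := hjoin ▸ iSup_le fun i => by
    rintro x y (rfl | ⟨hx, hy⟩)
    · rfl
    · by_cases hd : Disjoint (W i) A
      · exact propext (iff_of_false (disjoint_left.mp hd hx) (disjoint_left.mp hd hy))
      · exact propext (iff_of_true (hclosed i hd hx) (hclosed i hd hy))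
  obtain ⟨a, ha⟩ := hA
  exact eq_univ_of_forall fun x => (Setoid.ker_def.mp (hle trivial) : (x ∈ A) = (a ∈ A)) ▸ ha

/-- `g` is an exploration order of the blocks of `s`, starting from the vertices `A`. -/
lemma exists_injOn_not_disjoint_union_biUnion [DecidableEq ι] (hW : ∀ i, (W i).Nonempty)
    (s : Finset ι) (A : Finset α)
    (hA : ∀ B, A ⊆ B → (∀ i ∈ s, ¬Disjoint (W i) B → W i ⊆ B) → B = univ) :
    ∃ g : ι → ℕ, Set.InjOn g s ∧
      ∀ i ∈ s, ¬Disjoint (W i) (A ∪ (s.filter (g · < g i)).biUnion W) := by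
  induction s using Finset.strongInduction generalizing A with
  | H s ih =>
    rcases s.eq_empty_or_nonempty with rfl | ⟨i₀, hi₀⟩
    · exact ⟨0, by simp, by simp⟩
    obtain ⟨i, hi, hiA⟩ : ∃ i ∈ s, ¬Disjoint (W i) A := by
      by_contra! hdisj
      have hAuniv := hA A subset_rfl fun j hj hd => absurd (hdisj j hj) hd
      obtain ⟨x, hx⟩ := hW i₀
      exact disjoint_left.mp (hdisj i₀ hi₀) hx (hAuniv ▸ mem_univ x)
    obtain ⟨g, hg, hgW⟩ := ih (s.erase i) (erase_ssubset hi) (A ∪ W i) fun B hB hcl =>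
      hA B (subset_union_left.trans hB) fun j hj hd => by
        by_cases hji : j = i
        · exact hji ▸ subset_union_right.trans hB
        · exact hcl j (mem_erase.mpr ⟨hji, hj⟩) hd
    refine ⟨fun j => if j = i then 0 else g j + 1, fun a ha b hb hab => ?_, fun j hj => ?_⟩
    · simp only at hab
      split_ifs at hab with hai hbi hbi
      · exact hai.trans hbi.symm
      · exact hg (mem_erase.mpr ⟨hai, ha⟩) (mem_erase.mpr ⟨hbi, hb⟩) (by omega)
    · by_cases hji : j = i
      · subst hji
        simpa using fun hd => hiA hd
      refine fun hd => hgW j (mem_erase.mpr ⟨hji, hj⟩) (hd.mono_right fun x hx => ?_)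
      simp only [mem_union, mem_biUnion, mem_filter, mem_erase] at hx ⊢
      rcases hx with (hx | hx) | ⟨l, ⟨⟨hli, hl⟩, hlt⟩, hx⟩
      · exact .inl hx
      · exact .inr ⟨i, ⟨hi, by simp [hji]⟩, hx⟩
      · exact .inr ⟨l, ⟨hl, by simp [hli, hji, hlt]⟩, hx⟩

end Exploration

section ReachedBefore

variable {α ι : Type*} [DecidableEq α] [Fintype ι] {W : ι → Finset α} {r : α} {g : ι → ℕ}

def reachedBefore (W : ι → Finset α) (r : α) (g : ι → ℕ) (i : ι) : Finset α :=
  insert r ((univ.filter (g · < g i)).biUnion W)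

lemma exists_injective_not_disjoint_reachedBefore [Fintype α] [DecidableEq ι]
    (hW : ∀ i, (W i).Nonempty) (hjoin : ⨆ i, tauSetoid (W i) = ⊤) (r : α) :
    ∃ g : ι → ℕ, Injective g ∧ ∀ i, ¬Disjoint (W i) (reachedBefore W r g i) := by
  obtain ⟨g, hg, hmeet⟩ := exists_injOn_not_disjoint_union_biUnion hW univ {r}
    fun B hB hcl => eq_univ_of_iSup_tauSetoid_eq_top hjoin ⟨r, hB (mem_singleton_self r)⟩
      fun i => hcl i (mem_univ i)
  exact ⟨g, Set.injOn_univ.mp (by simpa using hg),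
    fun i => by simpa only [reachedBefore, insert_eq] using hmeet i (mem_univ i)⟩

lemma reachedBefore_mono {i j : ι} (h : g i ≤ g j) :
    reachedBefore W r g i ⊆ reachedBefore W r g j :=
  insert_subset_insert _ <| biUnion_subset_biUnion_of_subset_left _ fun l hl => by
    simp only [mem_filter, mem_univ, true_and] at hl ⊢
    omega

lemma subset_reachedBefore {i j : ι} (h : g i < g j) : W i ⊆ reachedBefore W r g j :=
  (subset_biUnion_of_mem W (mem_filter.mpr ⟨mem_univ i, h⟩)).trans (subset_insert _ _)

lemma pairwise_disjoint_sdiff_reachedBefore (hg : Injective g) :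
    Pairwise (Disjoint on fun i => W i \ reachedBefore W r g i) := by
  have key {i j : ι} (h : g i < g j) :
      Disjoint (W i \ reachedBefore W r g i) (W j \ reachedBefore W r g j) :=
    disjoint_of_subset_left (sdiff_subset.trans (subset_reachedBefore h)) sdiff_disjoint.symm
  intro i j hij
  rcases (hg.ne hij).lt_or_gt with h | h
  · exact key h
  · exact (key h).symm

lemma biUnion_sdiff_reachedBefore [Fintype α] (hcover : univ.biUnion W = univ) :
    univ.biUnion (fun i => W i \ reachedBefore W r g i) = univ.erase r := by
  ext v
  rw [mem_biUnion, mem_erase]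
  constructor
  · rintro ⟨i, -, hv⟩
    exact ⟨fun hvr => (mem_sdiff.mp hv).2 (hvr ▸ mem_insert_self _ _), mem_univ v⟩
  · rintro ⟨hv, -⟩
    have hne : (univ.filter (v ∈ W ·)).Nonempty := by
      obtain ⟨i, -, hi⟩ := mem_biUnion.mp (by rw [hcover]; exact mem_univ v)
      exact ⟨i, mem_filter.mpr ⟨mem_univ i, hi⟩⟩
    obtain ⟨i, hi, hmin⟩ := exists_min_image _ g hne
    refine ⟨i, mem_univ i, mem_sdiff.mpr ⟨(mem_filter.mp hi).2, fun hreach => ?_⟩⟩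
    rcases mem_insert.mp hreach with hvr | hreach
    · exact hv hvr
    · obtain ⟨j, hj, hvj⟩ := mem_biUnion.mp hreach
      exact (hmin j (mem_filter.mpr ⟨mem_univ j, hvj⟩)).not_gt (mem_filter.mp hj).2

lemma pointerAcyclic_sdiff_reachedBefore {p : ι → α} (hp : ∀ i, p i ∈ reachedBefore W r g i) :
    PointerAcyclic (fun i => W i \ reachedBefore W r g i) p :=
  ⟨g, fun i _ hij => lt_of_not_ge fun h => (mem_sdiff.mp hij).2 (reachedBefore_mono h (hp i))⟩

/-- Exploring the blocks from `r`, each block meets the reached vertices, so it adds at most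
`#(W i) - 1` new ones; since exactly `card α - 1` are added in total, each block meets the reached
vertices in a single vertex, its pointer. -/
theorem exists_pointerAcyclic_of_iSup_tauSetoid_eq_top [Fintype α] [DecidableEq ι]
    (hW : ∀ i, (W i).Nonempty) (hcover : univ.biUnion W = univ) (hjoin : ⨆ i, tauSetoid (W i) = ⊤)
    (hcard : Fintype.card α = 1 + ∑ i, (#(W i) - 1)) (r : α) :
    ∃ C p, Pairwise (Disjoint on C) ∧ univ.biUnion C = univ.erase r ∧ PointerAcyclic C p ∧
      ∀ i, W i = insert (p i) (C i) := by
  obtain ⟨g, hg, hmeet⟩ := exists_injective_not_disjoint_reachedBefore hW hjoin r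
  set R := reachedBefore W r g
  have hdisj : Pairwise (Disjoint on fun i => W i \ R i) :=
    pairwise_disjoint_sdiff_reachedBefore hg
  have hunion : univ.biUnion (fun i => W i \ R i) = univ.erase r :=
    biUnion_sdiff_reachedBefore hcover
  have hsplit (i : ι) : #(W i ∩ R i) + #(W i \ R i) = #(W i) := card_inter_add_card_sdiff _ _
  have hpos (i : ι) : 0 < #(W i ∩ R i) :=
    card_pos.mpr (not_disjoint_iff_nonempty_inter.mp (hmeet i))
  have hle (i : ι) : #(W i \ R i) ≤ #(W i) - 1 := by
    have := hsplit i
    have := hpos i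
    omega
  have hsum : ∑ i, #(W i \ R i) = ∑ i, (#(W i) - 1) := by
    rw [← card_biUnion fun i _ j _ h => hdisj h, hunion, card_erase_of_mem (mem_univ r),
      card_univ]
    omega
  have hone (i : ι) : #(W i ∩ R i) = 1 := by
    have := (sum_eq_sum_iff_of_le fun i _ => hle i).mp hsum i (mem_univ i)
    have := hsplit i
    have := hpos i
    omega
  choose p hp using fun i => card_eq_one.mp (hone i)
  refine ⟨fun i => W i \ R i, p, hdisj, hunion,
    pointerAcyclic_sdiff_reachedBefore fun i => (mem_inter.mp (hp i ▸ mem_singleton_self _)).2,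
    fun i => ?_⟩
  rw [insert_eq, ← hp i, union_comm, sdiff_union_inter]

end ReachedBefore

section Count

variable {α ι : Type*} [Fintype α] [DecidableEq α] [Fintype ι] [DecidableEq ι] {m : ι → ℕ}

theorem card_connected_cover_eq_card_pointerAcyclic [Nonempty ι] (hm : ∀ i, 1 ≤ m i)
    (hcard : Fintype.card α = 1 + ∑ i, (m i - 1)) (r : α) :
    Nat.card {W : ι → Finset α //
        (∀ i, #(W i) = m i) ∧ univ.biUnion W = univ ∧ (⨆ i, tauSetoid (W i)) = ⊤} =
      Nat.card {x : (ι → Finset α) × (ι → α) //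
        IsOrderedPartition (univ.erase r) (m · - 1) x.1 ∧ PointerAcyclic x.1 x.2} := by
  symm
  refine Nat.card_congr <| Equiv.ofBijective (fun x => ⟨fun i => insert (x.1.2 i) (x.1.1 i),
      fun i => ?_, biUnion_insert_eq_univ x.2.1.2.2 x.2.2,
      iSup_tauSetoid_insert_eq_top x.2.1.2.2 x.2.2⟩) ⟨?_, ?_⟩
  · have hCi : #(x.1.1 i) = m i - 1 := x.2.1.1 i
    have := hm i
    rw [card_insert_of_notMem (x.2.2.notMem_self i)]
    omega
  · intro x y hxy
    obtain ⟨hC, hp⟩ := eq_and_eq_of_insert_eq x.2.1.2.1 x.2.1.2.2 y.2.1.2.2 x.2.2 y.2.2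
      (congrFun (congrArg Subtype.val hxy))
    exact Subtype.ext (Prod.ext hC hp)
  · rintro ⟨W, hWcard, hcover, hjoin⟩
    obtain ⟨C, p, hdisj, hC, hp, hW⟩ := exists_pointerAcyclic_of_iSup_tauSetoid_eq_top
      (fun i => card_pos.mp (hWcard i ▸ hm i)) hcover hjoin (by simpa only [hWcard]) r
    obtain rfl : W = fun i => insert (p i) (C i) := funext hW
    refine ⟨⟨(C, p), ⟨fun i => ?_, hdisj, hC⟩, hp⟩, rfl⟩
    show #(C i) = m i - 1
    have := hWcard i
    rw [card_insert_of_notMem (hp.notMem_self i)] at this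
    omega

theorem card_orderedPartition_pointerAcyclic_eq {k : ℕ} (m : Fin (k + 1) → ℕ)
    (hcard : Fintype.card α = 1 + ∑ i, (m i - 1)) (r : α) :
    Nat.card {x : (Fin (k + 1) → Finset α) × (Fin (k + 1) → α) //
        IsOrderedPartition (univ.erase r) (m · - 1) x.1 ∧ PointerAcyclic x.1 x.2} =
      Nat.multinomial univ (m · - 1) * Fintype.card α ^ k := by
  classical
  have hfiber (C : Fin (k + 1) → Finset α) :
      Nat.card {p // IsOrderedPartition (univ.erase r) (m · - 1) C ∧ PointerAcyclic C p} =
        if IsOrderedPartition (univ.erase r) (m · - 1) C then Fintype.card α ^ k else 0 := by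
    split_ifs with hC
    · simp only [hC, true_and]
      rw [card_pointerAcyclic C hC.2.1, hC.2.2, sdiff_erase_self (mem_univ r), card_singleton,
        one_mul]
    · simp [hC]
  rw [Nat.card_congr (Equiv.subtypeProdEquivSigmaSubtype fun C p =>
      IsOrderedPartition (univ.erase r) (m · - 1) C ∧ PointerAcyclic C p), Nat.card_sigma,
    sum_congr rfl fun C _ => hfiber C, sum_ite, sum_const_zero, add_zero, sum_const, smul_eq_mul,
    ← Fintype.card_subtype, ← Nat.card_eq_fintype_card, card_isOrderedPartition]
  rw [card_erase_of_mem (mem_univ r), card_univ, hcard, Nat.add_sub_cancel_left]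

end Count

theorem statement5 (k : ℕ) (hk : 1 ≤ k) (m : Fin k → ℕ) (hm : ∀ i, 1 ≤ m i)
    (M : ℕ) (hM : M = ∑ i, m i) (n : ℕ) (hn : n = M - (k - 1)) :
    Nat.card {W : Fin k → Finset (Fin n) //
        (∀ i, (W i).card = m i) ∧ Finset.univ.biUnion W = Finset.univ ∧
        (⨆ i, tauSetoid (W i)) = ⊤} =
      Nat.multinomial Finset.univ (fun i => m i - 1) * (M - (k - 1)) ^ (k - 1) := by
  obtain ⟨k, rfl⟩ : ∃ k', k = k' + 1 := ⟨k - 1, by omega⟩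
  have hsum : ∑ i, m i = ∑ i, (m i - 1) + (k + 1) := by
    simpa [sum_add_distrib] using
      sum_congr rfl fun i (_ : i ∈ univ) => (Nat.sub_add_cancel (hm i)).symm
  have hcard : Fintype.card (Fin n) = 1 + ∑ i, (m i - 1) := by
    rw [Fintype.card_fin]
    omega
  rw [card_connected_cover_eq_card_pointerAcyclic hm hcard ⟨0, by omega⟩,
    card_orderedPartition_pointerAcyclic_eq m hcard, Fintype.card_fin, ← hn]
  rfl
end

section
/- Let p be a monic complex polynomial of degree d ≥ 1 all of whose roots are nonnegative real numbers. Then, with convergence meaning coefficientwise convergence of polynomials as m → ∞: (i) if ã_1(p) < 1, then p^{⊠_d m} → x^d; (ii) if ã_1(p) = 1 and ã_2(p) < 1, then p^{⊠_d m} → x^d − d·x^{d−1}; (iii) if ã_1(p) = 1 and ã_2(p) = 1, then p(x) = (x−1)^d, and hence p^{⊠_d m} = (x−1)^d for every m. -/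
/-
The coefficient of `x^(d-i)` in `p^{⊠_d m}` is `(-1)^i C(d,i) ã_i(p)^m`, so everything reduces to
locating the numbers `ã_i(p)`. For `p = ∏ (x - λ_j)` with `λ_j ≥ 0`, `ã_i(p) = e_i(λ) / C(d,i)` is
the `i`-th normalised elementary symmetric mean, and Maclaurin's inequality gives
`ã_i(p) ≤ ã_1(p)^i`, strictly for `i ≥ 2` unless all `λ_j` are equal. So `ã_1 < 1` forces every
`ã_i` with `i ≥ 1` into `[0, 1)`; and when `ã_1 = 1` (the `λ_j` have mean `1`), either all `λ_j`
equal `1`, which makes `ã_2 = 1`, or `ã_i < 1` for every `i ≥ 2`.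
-/

open Finset Filter

/-- For `p(x) = Σ_{i=0}^d a_i x^{d-i}`, `atilde d p i = (-1)^i * (d.choose i)⁻¹ * a_i`. -/
noncomputable def atilde (d : ℕ) (p : Polynomial ℂ) (i : ℕ) : ℂ :=
  (-1) ^ i * ((d.choose i : ℂ))⁻¹ * p.coeff (d - i)

/-- Finite free multiplicative convolution of degree-`d` polynomials. -/
noncomputable def ffmul (d : ℕ) (p q : Polynomial ℂ) : Polynomial ℂ :=
  ∑ i ∈ Finset.range (d + 1),
    Polynomial.C ((-1) ^ i * (d.choose i : ℂ) * atilde d p i * atilde d q i) *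
      Polynomial.X ^ (d - i)

/-- The `m`-fold finite free multiplicative convolution power `p^{⊠_d m}`;
the empty convolution is the identity `(x-1)^d` for `⊠_d`. -/
noncomputable def ffpow (d : ℕ) (p : Polynomial ℂ) : ℕ → Polynomial ℂ
  | 0 => (Polynomial.X - 1) ^ d
  | m + 1 => ffmul d (ffpow d p m) p

open Polynomial

namespace Multiset

section CommSemiring

variable {R S : Type*} [CommSemiring R] [CommSemiring S]

lemma esymm_zero (s : Multiset R) : s.esymm 0 = 1 := by
  simp [esymm]

lemma esymm_one (s : Multiset R) : s.esymm 1 = s.sum := by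
  simp [esymm, powersetCard_one]

lemma esymm_eq_zero_of_card_lt {s : Multiset R} {k : ℕ} (h : card s < k) : s.esymm k = 0 := by
  simp [esymm, powersetCard_eq_empty _ h]

lemma esymm_cons (a : R) (s : Multiset R) (k : ℕ) :
    (a ::ₘ s).esymm (k + 1) = s.esymm (k + 1) + a * s.esymm k := by
  simp [esymm, powersetCard_cons, map_map, sum_map_mul_left]

lemma esymm_map_ringHom (f : R →+* S) (s : Multiset R) (k : ℕ) :
    (s.map f).esymm k = f (s.esymm k) := by
  simp [esymm, powersetCard_map, map_map, map_multiset_sum, map_multiset_prod]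

end CommSemiring

lemma esymm_nonneg {R : Type*} [CommSemiring R] [PartialOrder R] [IsOrderedRing R]
    {s : Multiset R} (hs : ∀ x ∈ s, 0 ≤ x) (k : ℕ) : 0 ≤ s.esymm k :=
  sum_nonneg fun _ hx ↦ by
    obtain ⟨t, ht, rfl⟩ := mem_map.1 hx
    exact prod_nonneg fun y hy ↦ hs y (mem_of_le (mem_powersetCard.1 ht).1 hy)

end Multiset

section Maclaurin

variable {u v a : ℝ}

lemma pow_succ_add_mul_sub_le_pow_succ (hu : 0 ≤ u) (hv : 0 ≤ v) (n : ℕ) :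
    u ^ (n + 1) + (n + 1) * u ^ n * (v - u) ≤ v ^ (n + 1) := by
  simpa using pow_add_mul_le_add_pow hu (b := v - u) (by linarith) (n + 1)

/-- Apply the tangent line bound at the midpoint of `u` and `v`, where convexity is strict. -/
lemma pow_succ_add_mul_sub_lt_pow_succ (hu : 0 ≤ u) (hv : 0 ≤ v) (huv : u ≠ v) {n : ℕ}
    (hn : 1 ≤ n) : u ^ (n + 1) + (n + 1) * u ^ n * (v - u) < v ^ (n + 1) := by
  have hmid := (strictConvexOn_pow (n := n + 1) (by omega)).2 (Set.mem_Ici.2 hu)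
    (Set.mem_Ici.2 hv) huv (by norm_num : (0 : ℝ) < 1 / 2) (by norm_num : (0 : ℝ) < 1 / 2)
    (by norm_num)
  have htan := pow_succ_add_mul_sub_le_pow_succ hu (v := 1 / 2 * u + 1 / 2 * v)
    (by positivity) n
  simp only [smul_eq_mul] at hmid
  linarith

/-- The inductive step of Maclaurin's inequality: for a multiset of `n` elements with mean `u`, the
bounds on the two terms of `Multiset.esymm_cons` recombine into the tangent line of `x ^ (k + 1)`
at `u`, evaluated at the mean `(a + n * u) / (n + 1)` after adding `a`. -/
lemma choose_mul_pow_add_eq (n k : ℕ) (a u : ℝ) :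
    n.choose (k + 1) * u ^ (k + 1) + a * (n.choose k * u ^ k) =
      (n + 1).choose (k + 1) *
        (u ^ (k + 1) + (k + 1) * u ^ k * ((a + n * u) / (n + 1) - u)) := by
  have hsucc : ((n + 1).choose (k + 1) : ℝ) = n.choose k + n.choose (k + 1) := by
    exact_mod_cast Nat.choose_succ_succ n k
  have hmul : ((n + 1).choose (k + 1) : ℝ) * (k + 1) = (n + 1) * n.choose k := by
    exact_mod_cast (Nat.add_one_mul_choose_eq n k).symm
  have hn : (n : ℝ) + 1 ≠ 0 := by positivity
  have hmul' : ((n + 1).choose (k + 1) : ℝ) * (k + 1) / (n + 1) = n.choose k := by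
    rw [div_eq_iff hn, hmul, mul_comm]
  have hmean : (a + n * u) / (n + 1) - u = (a - u) / (n + 1) := by
    field_simp
    ring
  rw [hmean]
  linear_combination -(u ^ k * (a - u)) * hmul' - u ^ (k + 1) * hsucc

lemma choose_mul_pow_add_le (n k : ℕ) (ha : 0 ≤ a) (hu : 0 ≤ u) :
    n.choose (k + 1) * u ^ (k + 1) + a * (n.choose k * u ^ k) ≤
      (n + 1).choose (k + 1) * ((a + n * u) / (n + 1)) ^ (k + 1) := by
  rw [choose_mul_pow_add_eq]
  gcongr
  exact pow_succ_add_mul_sub_le_pow_succ hu (by positivity) k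

lemma choose_mul_pow_add_lt {n k : ℕ} (hk : 1 ≤ k) (hkn : k ≤ n) (ha : 0 ≤ a) (hu : 0 ≤ u)
    (hau : a ≠ u) :
    n.choose (k + 1) * u ^ (k + 1) + a * (n.choose k * u ^ k) <
      (n + 1).choose (k + 1) * ((a + n * u) / (n + 1)) ^ (k + 1) := by
  rw [choose_mul_pow_add_eq]
  have hmean : u ≠ (a + n * u) / (n + 1) := by
    rw [ne_eq, eq_div_iff (by positivity)]
    intro h
    exact hau (by linarith)
  gcongr
  · exact_mod_cast Nat.choose_pos (by omega)
  · exact pow_succ_add_mul_sub_lt_pow_succ hu (by positivity) hmean hk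

end Maclaurin

namespace Multiset

lemma card_mul_sum_div_card (s : Multiset ℝ) : (card s : ℝ) * (s.sum / card s) = s.sum := by
  rcases eq_or_ne s 0 with rfl | hs
  · simp
  · exact mul_div_cancel₀ _ (by simpa using hs)

variable {s : Multiset ℝ}

lemma mean_nonneg (hs : ∀ x ∈ s, 0 ≤ x) : 0 ≤ s.sum / card s :=
  div_nonneg (sum_nonneg hs) (Nat.cast_nonneg _)

/-- **Maclaurin's inequality**. -/
theorem esymm_le_choose_mul_mean_pow (hs : ∀ x ∈ s, 0 ≤ x) (k : ℕ) :
    s.esymm k ≤ (card s).choose k * (s.sum / card s) ^ k := by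
  induction s using Multiset.induction_on generalizing k with
  | empty =>
    cases k with
    | zero => simp [esymm_zero]
    | succ k => simp [esymm_eq_zero_of_card_lt (by simp : card (0 : Multiset ℝ) < k + 1)]
  | cons a t ih =>
    have ht : ∀ x ∈ t, 0 ≤ x := fun x hx ↦ hs x (mem_cons_of_mem hx)
    cases k with
    | zero => simp [esymm_zero]
    | succ k =>
      calc (a ::ₘ t).esymm (k + 1) = t.esymm (k + 1) + a * t.esymm k := esymm_cons a t k
        _ ≤ (card t).choose (k + 1) * (t.sum / card t) ^ (k + 1) +
              a * ((card t).choose k * (t.sum / card t) ^ k) := by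
          gcongr
          · exact ih ht (k + 1)
          · exact hs a (mem_cons_self a t)
          · exact ih ht k
        _ ≤ (card t + 1).choose (k + 1) *
              ((a + card t * (t.sum / card t)) / (card t + 1)) ^ (k + 1) :=
          choose_mul_pow_add_le _ _ (hs a (mem_cons_self a t)) (mean_nonneg ht)
        _ = _ := by simp [card_mul_sum_div_card]

theorem esymm_lt_choose_mul_mean_pow (hs : ∀ x ∈ s, 0 ≤ x) {a : ℝ} (ha : a ∈ s)
    (hmean : a ≠ s.sum / card s) {k : ℕ} (hk : 2 ≤ k) (hks : k ≤ card s) :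
    s.esymm k < (card s).choose k * (s.sum / card s) ^ k := by
  obtain ⟨t, rfl⟩ := exists_cons_of_mem ha
  obtain ⟨k, rfl⟩ : ∃ j, k = j + 1 := ⟨k - 1, by omega⟩
  have ht : ∀ x ∈ t, 0 ≤ x := fun x hx ↦ hs x (mem_cons_of_mem hx)
  have hsum : (a ::ₘ t).sum / card (a ::ₘ t) = (a + card t * (t.sum / card t)) / (card t + 1) := by
    simp [card_mul_sum_div_card]
  rw [hsum] at hmean ⊢
  have hat : a ≠ t.sum / card t := by
    intro h
    apply hmean
    rw [← h, eq_div_iff (by positivity)]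
    ring
  calc (a ::ₘ t).esymm (k + 1) = t.esymm (k + 1) + a * t.esymm k := esymm_cons a t k
    _ ≤ (card t).choose (k + 1) * (t.sum / card t) ^ (k + 1) +
          a * ((card t).choose k * (t.sum / card t) ^ k) := by
      gcongr
      · exact esymm_le_choose_mul_mean_pow ht (k + 1)
      · exact hs a ha
      · exact esymm_le_choose_mul_mean_pow ht k
    _ < (card t + 1).choose (k + 1) * ((a + card t * (t.sum / card t)) / (card t + 1)) ^ (k + 1) :=
      choose_mul_pow_add_lt (by omega) (by simpa using hks) (hs a ha) (mean_nonneg ht) hat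
    _ = _ := by simp

theorem esymm_lt_choose_of_sum_lt_card (hs : ∀ x ∈ s, 0 ≤ x) (hsum : s.sum < card s)
    {k : ℕ} (hk : 1 ≤ k) (hks : k ≤ card s) : s.esymm k < (card s).choose k := by
  have hcard : (0 : ℝ) < card s := by exact_mod_cast (by omega : 0 < card s)
  calc s.esymm k ≤ (card s).choose k * (s.sum / card s) ^ k := esymm_le_choose_mul_mean_pow hs k
    _ < (card s).choose k * 1 := by
      gcongr
      · exact_mod_cast Nat.choose_pos hks
      · exact pow_lt_one₀ (mean_nonneg hs) ((div_lt_one hcard).2 hsum)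
          (by omega)
    _ = _ := mul_one _

theorem esymm_lt_choose_of_sum_eq_card (hs : ∀ x ∈ s, 0 ≤ x) (hsum : s.sum = card s)
    {a : ℝ} (ha : a ∈ s) (ha1 : a ≠ 1) {k : ℕ} (hk : 2 ≤ k) (hks : k ≤ card s) :
    s.esymm k < (card s).choose k := by
  have hmean : s.sum / card s = 1 := by
    rw [hsum, div_self]
    exact_mod_cast (card_pos_iff_exists_mem.2 ⟨a, ha⟩).ne'
  simpa [hmean] using esymm_lt_choose_mul_mean_pow hs ha (hmean ▸ ha1) hk hks

end Multiset

section FiniteFreeConvolution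

variable {d i : ℕ}

lemma coeff_eq_atilde (q : ℂ[X]) (hi : i ≤ d) :
    q.coeff (d - i) = (-1) ^ i * d.choose i * atilde d q i := by
  have hC : (d.choose i : ℂ) ≠ 0 := by exact_mod_cast (Nat.choose_pos hi).ne'
  have hsign : ((-1 : ℂ) ^ i) * (-1) ^ i = 1 := pow_mul_pow_eq_one i (by norm_num)
  rw [atilde]
  field_simp
  linear_combination -(q.coeff (d - i)) * hsign

lemma atilde_eq_of_coeff_eq {q : ℂ[X]} {c : ℂ} (hi : i ≤ d)
    (h : q.coeff (d - i) = (-1) ^ i * d.choose i * c) : atilde d q i = c := by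
  have hC : (d.choose i : ℂ) ≠ 0 := by exact_mod_cast (Nat.choose_pos hi).ne'
  rw [coeff_eq_atilde q hi] at h
  simpa [hC] using h

lemma eq_of_atilde_eq {q r : ℂ[X]} (hq : q.natDegree ≤ d) (hr : r.natDegree ≤ d)
    (h : ∀ i ≤ d, atilde d q i = atilde d r i) : q = r := by
  ext j
  rcases le_or_gt j d with hj | hj
  · obtain ⟨i, hi, rfl⟩ : ∃ i ≤ d, j = d - i := ⟨d - j, by omega, by omega⟩
    rw [coeff_eq_atilde q hi, coeff_eq_atilde r hi, h i hi]
  · rw [coeff_eq_zero_of_natDegree_lt (by omega), coeff_eq_zero_of_natDegree_lt (by omega)]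

lemma natDegree_ffmul_le (q r : ℂ[X]) : (ffmul d q r).natDegree ≤ d :=
  natDegree_sum_le_of_forall_le _ _ fun i _ ↦ (natDegree_C_mul_X_pow_le _ _).trans (by omega)

lemma atilde_ffmul (q r : ℂ[X]) (hi : i ≤ d) :
    atilde d (ffmul d q r) i = atilde d q i * atilde d r i := by
  refine atilde_eq_of_coeff_eq hi ?_
  rw [ffmul, finsetSum_coeff, Finset.sum_eq_single i]
  · rw [coeff_C_mul_X_pow, if_pos rfl]
    ring
  · intro b hb hbi
    rw [coeff_C_mul_X_pow, if_neg (by rw [Finset.mem_range] at hb; omega)]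
  · intro hi'
    exact absurd (Finset.mem_range.2 (by omega)) hi'

lemma natDegree_X_sub_one_pow_le : ((X - 1 : ℂ[X]) ^ d).natDegree ≤ d := by
  simpa using natDegree_pow_le_of_le d (natDegree_X_sub_C_le (1 : ℂ))

lemma atilde_X_sub_one_pow (hi : i ≤ d) : atilde d ((X - 1) ^ d) i = 1 := by
  refine atilde_eq_of_coeff_eq hi ?_
  have h := coeff_X_add_C_pow (-1 : ℂ) d (d - i)
  rw [Nat.sub_sub_self hi, Nat.choose_symm hi] at h
  simpa [sub_eq_add_neg] using h

lemma natDegree_ffpow_le (p : ℂ[X]) : ∀ m, (ffpow d p m).natDegree ≤ d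
  | 0 => natDegree_X_sub_one_pow_le
  | _ + 1 => natDegree_ffmul_le _ _

lemma atilde_ffpow (p : ℂ[X]) (m : ℕ) (hi : i ≤ d) :
    atilde d (ffpow d p m) i = atilde d p i ^ m := by
  induction m with
  | zero => rw [ffpow, atilde_X_sub_one_pow hi, pow_zero]
  | succ m ih => rw [ffpow, atilde_ffmul _ _ hi, ih, pow_succ]

lemma ffpow_X_sub_one_pow (m : ℕ) : ffpow d ((X - 1) ^ d) m = (X - 1) ^ d :=
  eq_of_atilde_eq (natDegree_ffpow_le _ m) natDegree_X_sub_one_pow_le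
    fun _ hi ↦ by rw [atilde_ffpow _ _ hi, atilde_X_sub_one_pow hi, one_pow]

theorem tendsto_ffpow_coeff {p q : ℂ[X]} (hq : q.natDegree ≤ d)
    (h : ∀ i ≤ d, Tendsto (fun m ↦ atilde d p i ^ m) atTop (nhds (atilde d q i))) (j : ℕ) :
    Tendsto (fun m ↦ (ffpow d p m).coeff j) atTop (nhds (q.coeff j)) := by
  rcases le_or_gt j d with hj | hj
  · obtain ⟨i, hi, rfl⟩ : ∃ i ≤ d, j = d - i := ⟨d - j, by omega, by omega⟩
    simp_rw [coeff_eq_atilde _ hi, atilde_ffpow p _ hi]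
    exact (h i hi).const_mul _
  · simp_rw [coeff_eq_zero_of_natDegree_lt ((natDegree_ffpow_le p _).trans_lt hj),
      coeff_eq_zero_of_natDegree_lt (hq.trans_lt hj)]
    exact tendsto_const_nhds

lemma atilde_X_pow (hi : i ≤ d) : atilde d (X ^ d) i = if i = 0 then 1 else 0 := by
  refine atilde_eq_of_coeff_eq hi ?_
  rw [coeff_X_pow]
  by_cases h : i = 0
  · simp [h]
  · rw [if_neg (by omega), if_neg h, mul_zero]

lemma natDegree_X_pow_sub_C_mul_X_pow_le (c : ℂ) :
    (X ^ d - C c * X ^ (d - 1)).natDegree ≤ d :=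
  (natDegree_sub_le _ _).trans
    (max_le (natDegree_X_pow_le d) ((natDegree_C_mul_X_pow_le c (d - 1)).trans (Nat.sub_le d 1)))

lemma atilde_X_pow_sub_C_mul_X_pow (hd : 1 ≤ d) (hi : i ≤ d) :
    atilde d (X ^ d - C (d : ℂ) * X ^ (d - 1)) i = if i ≤ 1 then 1 else 0 := by
  refine atilde_eq_of_coeff_eq hi ?_
  rw [coeff_sub, coeff_X_pow, coeff_C_mul_X_pow]
  obtain rfl | rfl | hi2 : i = 0 ∨ i = 1 ∨ 2 ≤ i := by omega
  · rw [if_pos (by omega), if_neg (by omega), if_pos zero_le_one]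
    simp
  · rw [if_neg (by omega), if_pos rfl, if_pos le_rfl]
    simp
  · rw [if_neg (by omega), if_neg (by omega), if_neg (by omega)]
    simp

end FiniteFreeConvolution

section RealRoots

open Multiset
open scoped ComplexOrder

noncomputable def rootsPoly (s : Multiset ℝ) : ℂ[X] :=
  (s.map fun t : ℝ ↦ X - C (t : ℂ)).prod

variable {s : Multiset ℝ} {i : ℕ}

lemma atilde_rootsPoly (hi : i ≤ card s) :
    atilde (card s) (rootsPoly s) i =
      ((s.esymm i / (card s).choose i : ℝ) : ℂ) := by
  have hC : ((card s).choose i : ℂ) ≠ 0 := by exact_mod_cast (Nat.choose_pos hi).ne'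
  refine atilde_eq_of_coeff_eq hi ?_
  rw [rootsPoly]
  have h := prod_X_sub_C_coeff (s.map ((↑) : ℝ → ℂ)) (k := card s - i) (by simp)
  rw [Multiset.map_map, Multiset.card_map, Nat.sub_sub_self hi, Function.comp_def] at h
  rw [h, show (s.map ((↑) : ℝ → ℂ)).esymm i = _ from esymm_map_ringHom Complex.ofRealHom s i]
  rw [Complex.ofRealHom_eq_coe]
  push_cast
  field_simp

lemma atilde_rootsPoly_zero :
    atilde (card s) (rootsPoly s) 0 = 1 := by
  rw [atilde_rootsPoly (Nat.zero_le _), esymm_zero]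
  simp

lemma sum_eq_card_of_atilde_one_eq_one
    (h1 : atilde (card s) (rootsPoly s) 1 = 1) : s.sum = card s := by
  have hs : 1 ≤ card s := by
    by_contra! h
    simp [atilde, Nat.lt_one_iff.1 h] at h1
  rw [atilde_rootsPoly hs, esymm_one, Nat.choose_one_right] at h1
  have hs' : (card s : ℝ) ≠ 0 := by positivity
  exact_mod_cast (div_eq_one_iff_eq hs').1 (by exact_mod_cast h1)

lemma norm_atilde_rootsPoly_lt_one (hs : ∀ x ∈ s, 0 ≤ x) (hi : i ≤ card s)
    (h : s.esymm i < (card s).choose i) :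
    ‖atilde (card s) (rootsPoly s) i‖ < 1 := by
  have hC : (0 : ℝ) < (card s).choose i := by exact_mod_cast Nat.choose_pos hi
  rw [atilde_rootsPoly hi, Complex.norm_real, Real.norm_eq_abs,
    abs_of_nonneg (div_nonneg (esymm_nonneg hs i) hC.le)]
  exact (div_lt_one hC).2 h

lemma rootsPoly_eq_X_sub_one_pow (h : ∀ x ∈ s, x = 1) :
    rootsPoly s = (X - 1) ^ card s := by
  rw [rootsPoly, eq_replicate_card.2 h]
  simp

theorem norm_atilde_rootsPoly_lt_one_of_atilde_one_lt_one (hs : ∀ x ∈ s, 0 ≤ x)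
    (h1 : atilde (card s) (rootsPoly s) 1 < 1) (hi1 : 1 ≤ i)
    (hi : i ≤ card s) : ‖atilde (card s) (rootsPoly s) i‖ < 1 := by
  refine norm_atilde_rootsPoly_lt_one hs hi (esymm_lt_choose_of_sum_lt_card hs ?_ hi1 hi)
  rw [atilde_rootsPoly (hi1.trans hi), esymm_one, Nat.choose_one_right] at h1
  have hcard : (0 : ℝ) < card s := by exact_mod_cast hi1.trans hi
  exact (div_lt_one hcard).1 (by exact_mod_cast h1)

theorem norm_atilde_rootsPoly_lt_one_of_atilde_two_lt_one (hs : ∀ x ∈ s, 0 ≤ x)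
    (h1 : atilde (card s) (rootsPoly s) 1 = 1)
    (h2 : atilde (card s) (rootsPoly s) 2 < 1) (hi2 : 2 ≤ i)
    (hi : i ≤ card s) : ‖atilde (card s) (rootsPoly s) i‖ < 1 := by
  by_cases hone : ∀ x ∈ s, x = 1
  · rw [rootsPoly_eq_X_sub_one_pow hone, atilde_X_sub_one_pow (by omega)] at h2
    exact absurd h2 (lt_irrefl 1)
  · obtain ⟨a, ha, ha1⟩ := not_forall₂.1 hone
    exact norm_atilde_rootsPoly_lt_one hs hi
      (esymm_lt_choose_of_sum_eq_card hs (sum_eq_card_of_atilde_one_eq_one h1) ha ha1 hi2 hi)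

theorem rootsPoly_eq_X_sub_one_pow_of_atilde_two_eq_one (hs : ∀ x ∈ s, 0 ≤ x)
    (h1 : atilde (card s) (rootsPoly s) 1 = 1)
    (h2 : atilde (card s) (rootsPoly s) 2 = 1) :
    rootsPoly s = (X - 1) ^ card s := by
  have hs2 : 2 ≤ card s := by
    by_contra! h
    simp [atilde, Nat.choose_eq_zero_of_lt h] at h2
  refine rootsPoly_eq_X_sub_one_pow fun a ha ↦ ?_
  by_contra ha1
  have h := norm_atilde_rootsPoly_lt_one hs hs2
    (esymm_lt_choose_of_sum_eq_card hs (sum_eq_card_of_atilde_one_eq_one h1) ha ha1 le_rfl hs2)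
  rw [h2, norm_one] at h
  exact lt_irrefl _ h

end RealRoots

open scoped ComplexOrder in
theorem statement9 (d : ℕ) (hd : 1 ≤ d) (p : Polynomial ℂ) (lam : Fin d → ℝ)
    (hlam : ∀ i, 0 ≤ lam i)
    (hp : p = ∏ i, (Polynomial.X - Polynomial.C ((lam i : ℝ) : ℂ))) :
    (atilde d p 1 < 1 →
      ∀ j, Tendsto (fun m => (ffpow d p m).coeff j) atTop
        (nhds ((Polynomial.X ^ d : Polynomial ℂ).coeff j))) ∧
    (atilde d p 1 = 1 → atilde d p 2 < 1 →
      ∀ j, Tendsto (fun m => (ffpow d p m).coeff j) atTop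
        (nhds ((Polynomial.X ^ d -
          Polynomial.C (d : ℂ) * Polynomial.X ^ (d - 1)).coeff j))) ∧
    (atilde d p 1 = 1 → atilde d p 2 = 1 →
      p = (Polynomial.X - 1) ^ d ∧ ∀ m, ffpow d p m = (Polynomial.X - 1) ^ d) := by
  obtain ⟨s, hs, rfl, rfl⟩ : ∃ s : Multiset ℝ, (∀ x ∈ s, 0 ≤ x) ∧ Multiset.card s = d ∧
      p = rootsPoly s :=
    ⟨univ.val.map lam, by simpa using hlam, by simp,
      by rw [hp, prod_eq_multiset_prod, rootsPoly, Multiset.map_map]; rfl⟩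
  refine ⟨fun h1 ↦ tendsto_ffpow_coeff (natDegree_X_pow_le _) fun i hi ↦ ?_,
    fun h1 h2 ↦ tendsto_ffpow_coeff (natDegree_X_pow_sub_C_mul_X_pow_le _) fun i hi ↦ ?_,
    fun h1 h2 ↦ ?_⟩
  · rw [atilde_X_pow hi]
    split_ifs with hi0
    · simp [hi0, atilde_rootsPoly_zero]
    · exact tendsto_pow_atTop_nhds_zero_of_norm_lt_one
        (norm_atilde_rootsPoly_lt_one_of_atilde_one_lt_one hs h1 (by omega) hi)
  · rw [atilde_X_pow_sub_C_mul_X_pow hd hi]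
    split_ifs with hi1
    · obtain rfl | rfl : i = 0 ∨ i = 1 := by omega
      · simp [atilde_rootsPoly_zero]
      · simp [h1]
    · exact tendsto_pow_atTop_nhds_zero_of_norm_lt_one
        (norm_atilde_rootsPoly_lt_one_of_atilde_two_lt_one hs h1 h2 (by omega) hi)
  · have hX := rootsPoly_eq_X_sub_one_pow_of_atilde_two_eq_one hs h1 h2
    refine ⟨hX, fun m ↦ ?_⟩
    rw [hX]
    exact ffpow_X_sub_one_pow m
end
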